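/- arXiv:2512.07914 — 5 statements merged into one kernel-verified Lean document; each statement's English description precedes it below -/
import Mathlib

section
/- For every 0 < α < 1 and every t ∈ ℝ, the function E_α is differentiable at t and its derivative satisfies (d/dt) E_α(t) = (1/α) E_{α,α}(t). -/
/-!
Along `α k + 1` the Gamma function eventually dominates every geometric sequence (compare it
with `⌊α k⌋!`), so `E_α` is a power series with infinite radius of convergence and may be
differentiated termwise. The functional equation `Γ(z + 1) = z Γ(z)` turns the shifted
coefficients `(k + 1) / Γ(α (k + 1) + 1)` of the derivative into `α⁻¹ / Γ(α k + α)`.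
-/

open Real Set

/-- Two-parameter Mittag-Leffler function of a real argument; terms at poles of Γ
are interpreted as 0 (in Lean, division by Γ = 0 gives 0). -/
noncomputable def mittagLeffler (α σ x : ℝ) : ℝ :=
  ∑' k : ℕ, x ^ k / Real.Gamma (α * (k : ℝ) + σ)

open Filter Topology
open scoped Nat

namespace Real

lemma factorial_floor_le_Gamma_add_one {x : ℝ} (hx : 1 ≤ x) : (⌊x⌋₊ ! : ℝ) ≤ Gamma (x + 1) := by
  have hone : (1 : ℝ) ≤ ⌊x⌋₊ := by exact_mod_cast Nat.one_le_floor_iff x |>.mpr hx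
  have hfloor : (⌊x⌋₊ : ℝ) ≤ x := Nat.floor_le (by linarith)
  rw [← Gamma_nat_eq_factorial]
  exact Gamma_strictMonoOn_Ici.monotoneOn (mem_Ici.2 (by linarith))
    (mem_Ici.2 (by linarith)) (by linarith)

lemma eventually_rpow_le_Gamma_add_one {B : ℝ} (hB : 1 ≤ B) :
    ∀ᶠ x : ℝ in atTop, B ^ x ≤ Gamma (x + 1) := by
  have hfac : ∀ᶠ n : ℕ in atTop, B ^ (n + 1) ≤ n ! := by
    have hlim : Tendsto (fun n : ℕ => B ^ (n + 1) / n !) atTop (𝓝 0) := by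
      have := (FloorSemiring.tendsto_pow_div_factorial_atTop B).const_mul B
      rw [mul_zero] at this
      exact this.congr fun n => by rw [pow_succ', mul_div_assoc]
    filter_upwards [hlim.eventually_le_const one_pos] with n hn
    rwa [div_le_one (by positivity)] at hn
  filter_upwards [tendsto_nat_floor_atTop.eventually hfac, eventually_ge_atTop 1] with x hx h1x
  calc B ^ x ≤ B ^ ((⌊x⌋₊ + 1 : ℕ) : ℝ) :=
        rpow_le_rpow_of_exponent_le hB (by push_cast; exact (Nat.lt_floor_add_one x).le)
    _ = B ^ (⌊x⌋₊ + 1) := rpow_natCast _ _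
    _ ≤ ⌊x⌋₊ ! := hx
    _ ≤ Gamma (x + 1) := factorial_floor_le_Gamma_add_one h1x

lemma eventually_pow_le_Gamma_mul_add_one {α : ℝ} (hα : 0 < α) {S : ℝ} (hS : 0 ≤ S) :
    ∀ᶠ k : ℕ in atTop, S ^ k ≤ Gamma (α * k + 1) := by
  set T := max S 1
  have hT : 1 ≤ T := le_max_right _ _
  have hαk : Tendsto (fun k : ℕ => α * k) atTop atTop :=
    tendsto_natCast_atTop_atTop.const_mul_atTop hα
  filter_upwards [hαk.eventually
    (eventually_rpow_le_Gamma_add_one (one_le_rpow hT (inv_nonneg.2 hα.le)))] with k hk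
  calc S ^ k ≤ T ^ k := pow_le_pow_left₀ hS (le_max_left _ _) k
    _ = (T ^ α⁻¹) ^ (α * k) := by
      rw [← rpow_mul (by positivity), inv_mul_cancel_left₀ hα.ne', rpow_natCast]
    _ ≤ Gamma (α * k + 1) := hk

lemma summable_pow_div_Gamma_mul_add_one {α : ℝ} (hα : 0 < α) {S : ℝ} (hS : 0 ≤ S) :
    Summable fun k : ℕ => S ^ k / Gamma (α * k + 1) := by
  refine .of_norm_bounded_eventually_nat summable_geometric_two ?_
  filter_upwards [eventually_pow_le_Gamma_mul_add_one hα (mul_nonneg zero_le_two hS)] with k hk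
  have hΓ : 0 < Gamma (α * k + 1) := Gamma_pos_of_pos (by positivity)
  rw [norm_of_nonneg (by positivity), div_le_iff₀ hΓ]
  calc S ^ k = (1 / 2) ^ k * (2 * S) ^ k := by rw [← mul_pow]; ring
    _ ≤ (1 / 2) ^ k * Gamma (α * k + 1) := by gcongr

lemma succ_div_Gamma_mul_succ_add_one {α : ℝ} (hα : 0 < α) (k : ℕ) :
    ((k : ℝ) + 1) / Gamma (α * ↑(k + 1) + 1) = α⁻¹ / Gamma (α * k + α) := by
  have hpos : 0 < α * k + α := by positivity
  rw [Nat.cast_succ, show α * (k + 1) + 1 = (α * k + α) + 1 by ring,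
    Gamma_add_one hpos.ne']
  have := (Gamma_pos_of_pos hpos).ne'
  field_simp

end Real

theorem hasDerivAt_tsum_mul_pow {c : ℕ → ℝ} (hc : ∀ S, 0 ≤ S → Summable fun k => |c k| * S ^ k)
    (t : ℝ) :
    HasDerivAt (fun x => ∑' k, c k * x ^ k) (∑' k, (k + 1) * c (k + 1) * t ^ k) t := by
  set R := |t| + 1
  have hR : 1 ≤ R := by simp [R]
  have ht : t ∈ Metric.ball (0 : ℝ) R := by simp [R]
  have hderiv : ∀ k y, y ∈ Metric.ball (0 : ℝ) R →
      HasDerivAt (fun x => c k * x ^ k) (c k * (k * y ^ (k - 1))) y :=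
    fun k y _ => (hasDerivAt_pow k y).const_mul (c k)
  have hbound : ∀ k y, y ∈ Metric.ball (0 : ℝ) R →
      ‖c k * (k * y ^ (k - 1))‖ ≤ |c k| * (2 * R) ^ k := by
    intro k y hy
    have hyR : |y| ≤ R := by
      rw [Metric.mem_ball, dist_zero_right, Real.norm_eq_abs] at hy; exact hy.le
    have hk : (k : ℝ) ≤ 2 ^ k := by exact_mod_cast k.lt_two_pow_self.le
    have hpow : |y| ^ (k - 1) ≤ R ^ k :=
      (pow_le_pow_left₀ (abs_nonneg y) hyR _).trans (pow_le_pow_right₀ hR (Nat.sub_le k 1))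
    rw [norm_mul, norm_mul, norm_pow, Real.norm_natCast, Real.norm_eq_abs, Real.norm_eq_abs,
      mul_pow]
    gcongr
  have hu := hc (2 * R) (by positivity)
  have hsum : Summable fun k => c k * t ^ k :=
    .of_norm (by simpa [abs_mul, abs_pow] using hc |t| (abs_nonneg t))
  have hsum' : Summable fun k => c k * (k * t ^ (k - 1)) :=
    .of_norm_bounded hu fun k => hbound k t ht
  refine (hasDerivAt_tsum_of_isPreconnected hu Metric.isOpen_ball
    (convex_ball (0 : ℝ) R).isPreconnected hderiv hbound ht hsum ht).congr_deriv ?_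
  rw [hsum'.tsum_eq_zero_add]
  simp only [CharP.cast_eq_zero, zero_mul, mul_zero, zero_add, Nat.cast_succ, Nat.add_sub_cancel]
  congr 1 with k
  ring

theorem mittagLeffler_hasDerivAt_general (α t : ℝ) (hα0 : 0 < α) :
    HasDerivAt (fun s : ℝ => mittagLeffler α 1 s) ((1 / α) * mittagLeffler α α t) t := by
  have hΓ : ∀ k : ℕ, 0 < Gamma (α * k + 1) := fun k => Gamma_pos_of_pos (by positivity)
  have hc : ∀ S, 0 ≤ S → Summable fun k : ℕ => |(Gamma (α * k + 1))⁻¹| * S ^ k := fun S hS => by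
    simpa only [abs_inv, abs_of_pos (hΓ _), inv_mul_eq_div]
      using summable_pow_div_Gamma_mul_add_one hα0 hS
  have hderiv := hasDerivAt_tsum_mul_pow hc t
  simp only [← div_eq_inv_mul] at hderiv
  refine hderiv.congr_deriv ?_
  rw [mittagLeffler, ← tsum_mul_left]
  congr 1 with k
  rw [← div_eq_mul_inv, succ_div_Gamma_mul_succ_add_one hα0]
  ring

theorem mittagLeffler_hasDerivAt (α t : ℝ) (hα0 : 0 < α) (hα1 : α < 1) :
    HasDerivAt (fun s : ℝ => mittagLeffler α 1 s) ((1 / α) * mittagLeffler α α t) t :=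
  mittagLeffler_hasDerivAt_general α t hα0
end

section
/- Let 0 < α < 1, ω ∈ ℝ, and t > 0. Then (1/Γ(1−α)) ∫_0^t (d/dτ)[E_α(ω τ^α)] · (t−τ)^{−α} dτ = ω · E_α(ω t^α); that is, the Caputo fractional derivative of order α of the function τ ↦ E_α(ω τ^α) at t equals ω E_α(ω t^α). -/
/-!
Differentiating the series termwise gives `d/dτ E_α(ω τ^α) = ω τ^(α-1) E_{α,α}(ω τ^α)`; the
differentiated series is locally dominated because `Γ(αk + c)` outgrows every geometric sequence.
After multiplying by `(t - τ)^(-α)`, each term is a multiple of a Beta integral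
`∫₀ᵗ τ^(a-1) (t-τ)^(b-1) dτ = Γ(a) Γ(b) / Γ(a+b) · t^(a+b-1)` of a nonnegative function, so the
series may be integrated termwise, and `a = αk + α`, `b = 1 - α` turn the coefficients
`1 / Γ(αk + α)` of `E_{α,α}` into `Γ(1 - α) / Γ(αk + 1)`, those of `E_{α,1}`.
-/

open Real Set MeasureTheory

theorem rpow_sub_two_le_exp_mul_Gamma {R y : ℝ} (hR : 1 ≤ R) (hy : 2 ≤ y) :
    R ^ (y - 2) ≤ exp R * Gamma y := by
  obtain ⟨m, hm⟩ := Nat.exists_eq_add_of_le (Nat.le_floor (by exact_mod_cast hy) : 2 ≤ ⌊y⌋₊)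
  have hmy : (m : ℝ) + 2 ≤ y := by
    simpa [hm, add_comm] using Nat.floor_le (by linarith : 0 ≤ y)
  have hym : y < m + 3 := by
    have := Nat.lt_floor_add_one y
    rw [hm] at this
    push_cast at this
    linarith
  calc R ^ (y - 2) ≤ R ^ ((m + 1 : ℕ) : ℝ) :=
        rpow_le_rpow_of_exponent_le hR (by push_cast; linarith)
    _ ≤ exp R * (m + 1).factorial := by
        rw [rpow_natCast, ← div_le_iff₀ (by positivity)]
        exact pow_div_factorial_le_exp (x := R) (by linarith) (m + 1)
    _ = exp R * Gamma ((m + 1 : ℕ) + 1) := by rw [Gamma_nat_eq_factorial]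
    _ ≤ exp R * Gamma y := by
        gcongr
        exact Gamma_strictMonoOn_Ici.monotoneOn (by rw [mem_Ici]; push_cast; linarith)
          (by rw [mem_Ici]; linarith) (by push_cast; linarith)

theorem summable_pow_div_Gamma {α : ℝ} (hα : 0 < α) (c r : ℝ) :
    Summable fun k : ℕ => r ^ k / Gamma (α * k + c) := by
  set R := max 1 ((2 * |r|) ^ α⁻¹)
  have hR : 1 ≤ R := le_max_left _ _
  have hRα : 2 * |r| ≤ R ^ α :=
    calc 2 * |r| = ((2 * |r|) ^ α⁻¹) ^ α := (rpow_inv_rpow (by positivity) hα.ne').symm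
      _ ≤ R ^ α := rpow_le_rpow (by positivity) (le_max_right _ _) hα.le
  have hlarge : ∀ᶠ k : ℕ in Filter.atTop, 2 ≤ α * k + c :=
    (Filter.tendsto_atTop_add_const_right _ c
      (tendsto_natCast_atTop_atTop.const_mul_atTop hα)).eventually_ge_atTop 2
  refine .of_norm_bounded_eventually_nat
    (summable_geometric_two.mul_left (exp R * R ^ (2 - c))) ?_
  filter_upwards [hlarge] with k hk
  have hΓ : 0 < Gamma (α * k + c) := Gamma_pos_of_pos (by linarith)
  have hRk : R ^ (2 - c) * R ^ (α * k + c - 2) = (R ^ α) ^ k := by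
    rw [← rpow_mul_natCast (by positivity), ← rpow_add (by positivity)]; ring_nf
  rw [norm_div, norm_pow, Real.norm_of_nonneg hΓ.le, Real.norm_eq_abs, div_le_iff₀ hΓ]
  calc |r| ^ k ≤ (R ^ α / 2) ^ k := by gcongr; linarith
    _ = R ^ (2 - c) * (1 / 2) ^ k * R ^ (α * k + c - 2) := by
        rw [div_pow, ← hRk, one_div_pow]; ring
    _ ≤ R ^ (2 - c) * (1 / 2) ^ k * (exp R * Gamma (α * k + c)) := by
        gcongr; exact rpow_sub_two_le_exp_mul_Gamma hR hk
    _ = exp R * R ^ (2 - c) * (1 / 2) ^ k * Gamma (α * k + c) := by ring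

theorem integral_rpow_mul_sub_rpow {a b T : ℝ} (ha : 0 < a) (hb : 0 < b) (hT : 0 < T) :
    ∫ τ in (0 : ℝ)..T, τ ^ (a - 1) * (T - τ) ^ (b - 1)
      = Gamma a * Gamma b / Gamma (a + b) * T ^ (a + b - 1) := by
  apply Complex.ofReal_injective
  have hΓ : Complex.Gamma (a + b) ≠ 0 := by
    rw [← Complex.ofReal_add, Complex.Gamma_ofReal]
    exact_mod_cast (Gamma_pos_of_pos (add_pos ha hb)).ne'
  have hB : Complex.betaIntegral a b
      = Complex.Gamma a * Complex.Gamma b / Complex.Gamma (a + b) := by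
    rw [Complex.Gamma_mul_Gamma_eq_betaIntegral (by simpa using ha) (by simpa using hb),
      mul_div_cancel_left₀ _ hΓ]
  have hcpow : EqOn (fun τ : ℝ => ((τ ^ (a - 1) * (T - τ) ^ (b - 1) : ℝ) : ℂ))
      (fun τ : ℝ => (τ : ℂ) ^ ((a : ℂ) - 1) * ((T : ℂ) - τ) ^ ((b : ℂ) - 1)) (uIcc 0 T) := by
    intro τ hτ
    rw [uIcc_of_le hT.le] at hτ
    push_cast [Complex.ofReal_cpow hτ.1, Complex.ofReal_cpow (sub_nonneg.2 hτ.2)]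
    rfl
  rw [← intervalIntegral.integral_ofReal, intervalIntegral.integral_congr hcpow,
    Complex.betaIntegral_scaled _ _ hT, hB]
  push_cast [Complex.ofReal_cpow hT.le, ← Complex.Gamma_ofReal]
  field_simp

-- A nonzero interval integral cannot be the junk value `0` of a non-integrable function.
theorem intervalIntegrable_rpow_mul_sub_rpow {a b T : ℝ} (ha : 0 < a) (hb : 0 < b) (hT : 0 < T) :
    IntervalIntegrable (fun τ => τ ^ (a - 1) * (T - τ) ^ (b - 1)) volume 0 T := by
  refine intervalIntegral.intervalIntegrable_of_integral_ne_zero ?_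
  rw [integral_rpow_mul_sub_rpow ha hb hT]
  have := Gamma_pos_of_pos ha
  have := Gamma_pos_of_pos hb
  have := Gamma_pos_of_pos (add_pos ha hb)
  positivity

theorem integral_tsum_mul_of_nonneg {X : Type*} [MeasurableSpace X] {μ : Measure X}
    {c : ℕ → ℝ} {g : ℕ → X → ℝ} (hg : ∀ k, 0 ≤ᵐ[μ] g k) (hgi : ∀ k, Integrable (g k) μ)
    (hsum : Summable fun k => |c k| * ∫ x, g k x ∂μ) :
    ∫ x, ∑' k, c k * g k x ∂μ = ∑' k, c k * ∫ x, g k x ∂μ := by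
  have hnorm : ∀ k, ∫ x, ‖c k * g k x‖ ∂μ = |c k| * ∫ x, g k x ∂μ := fun k => by
    rw [← integral_const_mul]
    refine integral_congr_ae ?_
    filter_upwards [hg k] with x hx
    rw [norm_mul, Real.norm_of_nonneg hx, Real.norm_eq_abs]
  rw [← integral_tsum_of_summable_integral_norm (fun k => (hgi k).const_mul (c k))
    (by simpa only [hnorm] using hsum)]
  simp_rw [integral_const_mul]

theorem rpow_le_rpow_add_rpow {a b x : ℝ} (ha : 0 < a) (hax : a ≤ x) (hxb : x ≤ b) (p : ℝ) :
    x ^ p ≤ a ^ p + b ^ p := by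
  rcases le_total p 0 with hp | hp
  · linarith [rpow_le_rpow_of_nonpos ha hax hp, rpow_nonneg (ha.le.trans (hax.trans hxb)) p]
  · linarith [rpow_le_rpow (ha.le.trans hax) hxb hp, rpow_nonneg ha.le p]

theorem hasDerivAt_mittagLeffler_mul_rpow {α : ℝ} (hα : 0 < α) (ω : ℝ) {τ : ℝ} (hτ : 0 < τ) :
    HasDerivAt (fun x => mittagLeffler α 1 (ω * x ^ α))
      (ω * τ ^ (α - 1) * mittagLeffler α α (ω * τ ^ α)) τ := by
  set u : ℕ → ℝ → ℝ := fun k x => ω ^ (k + 1) / Gamma (α * (k + 1 : ℕ) + 1) * (x ^ α) ^ (k + 1)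
  have hshift : ∀ x, mittagLeffler α 1 (ω * x ^ α) = 1 + ∑' k, u k x := fun x => by
    rw [mittagLeffler, (summable_pow_div_Gamma hα 1 _).tsum_eq_zero_add]
    simp [u, mul_pow, div_mul_eq_mul_div]
  have hu_summable : Summable fun k => u k τ := by
    simpa [u, mul_pow, div_mul_eq_mul_div] using
      (summable_nat_add_iff 1).mpr (summable_pow_div_Gamma hα 1 (ω * τ ^ α))
  have hpos : ∀ k : ℕ, 0 < α * k + α := fun k => by positivity
  have hu : ∀ k x, x ∈ Ioo (τ / 2) (2 * τ) →
      HasDerivAt (u k) (ω * x ^ (α - 1) * ((ω * x ^ α) ^ k / Gamma (α * k + α))) x := by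
    intro k x hx
    have hx0 : 0 < x := by linarith [hx.1]
    refine (((hasDerivAt_rpow_const (Or.inl hx0.ne')).pow (k + 1)).const_mul _).congr_deriv ?_
    rw [show α * ((k + 1 : ℕ) : ℝ) + 1 = (α * k + α) + 1 by push_cast; ring,
      Gamma_add_one (hpos k).ne']
    have := Gamma_pos_of_pos (hpos k)
    field_simp
    push_cast
    ring
  have hbound : ∀ (k : ℕ) x, x ∈ Ioo (τ / 2) (2 * τ) →
      ‖ω * x ^ (α - 1) * ((ω * x ^ α) ^ k / Gamma (α * k + α))‖
        ≤ |ω| * ((τ / 2) ^ (α - 1) + (2 * τ) ^ (α - 1))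
          * ((|ω| * (2 * τ) ^ α) ^ k / Gamma (α * k + α)) := by
    intro k x hx
    have hx0 : 0 < x := by linarith [hx.1]
    rw [norm_mul, norm_mul, norm_div, norm_pow, norm_mul,
      Real.norm_of_nonneg (Gamma_pos_of_pos (hpos k)).le,
      Real.norm_of_nonneg (rpow_nonneg hx0.le _), Real.norm_of_nonneg (rpow_nonneg hx0.le _),
      Real.norm_eq_abs]
    gcongr
    · exact rpow_le_rpow_add_rpow (by positivity) hx.1.le hx.2.le _
    · exact hx.2.le
  have hmem : τ ∈ Ioo (τ / 2) (2 * τ) := ⟨by linarith, by linarith⟩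
  have hderiv := (hasDerivAt_tsum_of_isPreconnected ((summable_pow_div_Gamma hα α _).mul_left _)
    isOpen_Ioo isPreconnected_Ioo hu hbound hmem hu_summable hmem).const_add 1
  simp_rw [hshift]
  rwa [mittagLeffler, ← tsum_mul_left]

theorem integral_rpow_mul_mittagLeffler_mul_sub_rpow {α β γ T : ℝ} (hα : 0 < α) (hβ : 0 < β)
    (hγ : 0 < γ) (hT : 0 < T) (ω : ℝ) :
    ∫ τ in (0 : ℝ)..T, τ ^ (β - 1) * mittagLeffler α β (ω * τ ^ α) * (T - τ) ^ (γ - 1)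
      = Gamma γ * T ^ (β + γ - 1) * mittagLeffler α (β + γ) (ω * T ^ α) := by
  set g : ℕ → ℝ → ℝ := fun k τ => τ ^ (α * k + β - 1) * (T - τ) ^ (γ - 1)
  have hpos : ∀ k : ℕ, 0 < α * k + β := fun k => by positivity
  have hg : ∀ k : ℕ, ∫ τ in Ioc 0 T, g k τ
      = Gamma (α * k + β) * Gamma γ / Gamma (α * k + β + γ) * T ^ (α * k + β + γ - 1) := by
    intro k
    rw [← intervalIntegral.integral_of_le hT.le]
    exact integral_rpow_mul_sub_rpow (hpos k) hγ hT
  have hterm : ∀ (z : ℝ) (k : ℕ), z ^ k / Gamma (α * k + β) * ∫ τ in Ioc 0 T, g k τ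
      = Gamma γ * T ^ (β + γ - 1) * ((z * T ^ α) ^ k / Gamma (α * k + (β + γ))) := by
    intro z k
    have := Gamma_pos_of_pos (hpos k)
    rw [hg, mul_pow, ← rpow_mul_natCast hT.le,
      show α * k + β + γ - 1 = (β + γ - 1) + α * k by ring, rpow_add hT, ← add_assoc]
    field_simp
  have hseries : ∀ τ ∈ Ioc 0 T, τ ^ (β - 1) * mittagLeffler α β (ω * τ ^ α) * (T - τ) ^ (γ - 1)
      = ∑' k : ℕ, ω ^ k / Gamma (α * k + β) * g k τ := by
    intro τ hτ
    rw [mittagLeffler, ← tsum_mul_left, ← tsum_mul_right]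
    congr 1 with k
    simp only [g]
    rw [show α * k + β - 1 = (β - 1) + α * k by ring, rpow_add hτ.1, rpow_mul_natCast hτ.1.le]
    ring
  rw [intervalIntegral.integral_of_le hT.le, setIntegral_congr_fun measurableSet_Ioc hseries,
    integral_tsum_mul_of_nonneg]
  · simp_rw [hterm, tsum_mul_left]
    rfl
  · exact fun k => ae_restrict_of_forall_mem measurableSet_Ioc fun τ hτ =>
      mul_nonneg (rpow_nonneg hτ.1.le _) (rpow_nonneg (sub_nonneg.2 hτ.2) _)
  · exact fun k => (intervalIntegrable_rpow_mul_sub_rpow (hpos k) hγ hT).1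
  · have := (summable_pow_div_Gamma hα (β + γ) (|ω| * T ^ α)).mul_left (Gamma γ * T ^ (β + γ - 1))
    simpa only [abs_div, abs_pow, abs_of_pos (Gamma_pos_of_pos (hpos _)), hterm] using this

theorem caputo_deriv_mittagLeffler (α ω t : ℝ) (hα0 : 0 < α) (hα1 : α < 1) (ht : 0 < t) :
    (1 / Real.Gamma (1 - α)) *
        (∫ τ in (0:ℝ)..t,
          (deriv (fun τ : ℝ => mittagLeffler α 1 (ω * τ ^ α)) τ) * (t - τ) ^ (-α))
      = ω * mittagLeffler α 1 (ω * t ^ α) := by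
  have hderiv : ∀ τ ∈ Ioo 0 t,
      deriv (fun τ : ℝ => mittagLeffler α 1 (ω * τ ^ α)) τ * (t - τ) ^ (-α)
        = ω * (τ ^ (α - 1) * mittagLeffler α α (ω * τ ^ α) * (t - τ) ^ ((1 - α) - 1)) := by
    intro τ hτ
    rw [(hasDerivAt_mittagLeffler_mul_rpow hα0 ω hτ.1).deriv, sub_sub_cancel_left]
    ring
  have hΓ : 0 < Gamma (1 - α) := Gamma_pos_of_pos (by linarith)
  rw [intervalIntegral.integral_of_le ht.le, integral_Ioc_eq_integral_Ioo,
    setIntegral_congr_fun measurableSet_Ioo hderiv, integral_const_mul,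
    ← integral_Ioc_eq_integral_Ioo, ← intervalIntegral.integral_of_le ht.le,
    integral_rpow_mul_mittagLeffler_mul_sub_rpow hα0 hα0 (by linarith) ht, add_sub_cancel,
    sub_self, rpow_zero]
  field_simp
end

section
/- Let 0 < α < 1, λ > 0, and let s ∈ ℝ satisfy s > λ^{1/α}. Then the improper integral ∫_0^∞ e^{−st} E_α(−λ t^α) dt converges and equals s^{α−1}/(s^α + λ). -/
/-!
Expand `E_α(-λ t^α)` in its power series and integrate term by term: since
`∫₀^∞ e^{-st} t^{αk} dt = Γ(αk+1) / s^{αk+1}`, the Gamma factors cancel and what remains is the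
geometric series `s⁻¹ ∑ (-λ/s^α)^k = s^{α-1}/(s^α + λ)`. The interchange of sum and integral is
justified by the absolute series `s⁻¹ ∑ (λ/s^α)^k`, which converges precisely because
`λ < s^α`, i.e. `λ^{1/α} < s`.
-/

open Real Set MeasureTheory

open Filter
open scoped ENNReal

namespace MeasureTheory

variable {X E : Type*} [MeasurableSpace X] {μ : Measure X} [NormedAddCommGroup E]
  [CompleteSpace E]

theorem integrable_tsum_of_summable_integral_norm {ι : Type*} [Countable ι] {F : ι → X → E}
    (hF_int : ∀ i, Integrable (F i) μ) (hF_sum : Summable fun i ↦ ∫ x, ‖F i x‖ ∂μ) :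
    Integrable (fun x ↦ ∑' i, F i x) μ := by
  have hmeas (i : ι) : AEMeasurable (fun x ↦ ‖F i x‖ₑ) μ := (hF_int i).1.enorm
  have hlint : ∫⁻ x, ∑' i, ‖F i x‖ₑ ∂μ < ∞ := by
    simp_rw [lintegral_tsum hmeas, ← ofReal_integral_norm_eq_lintegral_enorm (hF_int _),
      ← ENNReal.ofReal_tsum_of_nonneg (fun i ↦ integral_nonneg fun x ↦ norm_nonneg _) hF_sum]
    exact ENNReal.ofReal_lt_top
  have hsum : ∀ᵐ x ∂μ, Summable fun i ↦ F i x := by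
    filter_upwards [ae_lt_top' (AEMeasurable.tsum hmeas) hlint.ne] with x hx
    exact Summable.of_enorm hx.ne
  refine ⟨aestronglyMeasurable_of_tendsto_ae atTop
    (fun s ↦ s.aestronglyMeasurable_fun_sum fun i _ ↦ (hF_int i).1)
    (hsum.mono fun x hx ↦ hx.hasSum), ?_⟩
  exact (lintegral_mono fun x ↦ enorm_tsum_le_tsum_enorm).trans_lt hlint

end MeasureTheory

namespace Real

theorem integrableOn_rpow_mul_exp_neg_mul_Ioi {a r : ℝ} (ha : 0 < a) (hr : 0 < r) :
    IntegrableOn (fun t : ℝ ↦ t ^ (a - 1) * exp (-(r * t))) (Ioi 0) := by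
  refine (integrableOn_rpow_mul_exp_neg_mul_rpow (s := a - 1) (by linarith) one_pos hr).congr_fun
    (fun t _ ↦ ?_) measurableSet_Ioi
  simp [neg_mul]

end Real

section MittagLeffler

variable {α σ c s : ℝ}

noncomputable def mittagLefflerLaplaceTerm (α σ c s : ℝ) (k : ℕ) (t : ℝ) : ℝ :=
  c ^ k / Gamma (α * k + σ) * (t ^ (α * k + σ - 1) * exp (-(s * t)))

theorem tsum_mittagLefflerLaplaceTerm {t : ℝ} (ht : 0 < t) :
    ∑' k, mittagLefflerLaplaceTerm α σ c s k t =
      exp (-(s * t)) * (t ^ (σ - 1) * mittagLeffler α σ (c * t ^ α)) := by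
  rw [mittagLeffler, ← tsum_mul_left, ← tsum_mul_left]
  congr 1 with k
  have hpow : (t ^ α) ^ k = t ^ (α * k) := by rw [← rpow_natCast, ← rpow_mul ht.le]
  rw [mittagLefflerLaplaceTerm, add_sub_assoc, rpow_add ht, mul_pow, hpow]
  ring

theorem norm_mittagLefflerLaplaceTerm (hα : 0 ≤ α) (hσ : 0 < σ) {t : ℝ} (ht : 0 < t) (k : ℕ) :
    ‖mittagLefflerLaplaceTerm α σ c s k t‖ = mittagLefflerLaplaceTerm α σ |c| s k t := by
  have : 0 < Gamma (α * k + σ) := Gamma_pos_of_pos (by positivity)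
  rw [mittagLefflerLaplaceTerm, mittagLefflerLaplaceTerm, norm_mul, norm_div, norm_pow,
    Real.norm_eq_abs, Real.norm_eq_abs, abs_of_pos this, Real.norm_of_nonneg (by positivity)]

theorem integrableOn_mittagLefflerLaplaceTerm (hα : 0 ≤ α) (hσ : 0 < σ) (hs : 0 < s) (k : ℕ) :
    IntegrableOn (mittagLefflerLaplaceTerm α σ c s k) (Ioi 0) :=
  (integrableOn_rpow_mul_exp_neg_mul_Ioi (by positivity) hs).const_mul _

theorem integral_mittagLefflerLaplaceTerm (hα : 0 ≤ α) (hσ : 0 < σ) (hs : 0 < s) (k : ℕ) :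
    ∫ t in Ioi 0, mittagLefflerLaplaceTerm α σ c s k t = (c / s ^ α) ^ k / s ^ σ := by
  have : 0 < Gamma (α * k + σ) := Gamma_pos_of_pos (by positivity)
  simp_rw [mittagLefflerLaplaceTerm]
  rw [integral_const_mul, integral_rpow_mul_exp_neg_mul_Ioi (by positivity) hs, one_div,
    inv_rpow hs.le, rpow_add hs, rpow_mul hs.le, rpow_natCast, div_pow]
  field_simp

theorem laplace_transform_rpow_mul_mittagLeffler (hα : 0 ≤ α) (hσ : 0 < σ) (hs : 0 < s)
    (hc : |c| < s ^ α) :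
    IntegrableOn (fun t ↦ exp (-(s * t)) * (t ^ (σ - 1) * mittagLeffler α σ (c * t ^ α)))
      (Ioi 0) ∧
    ∫ t in Ioi 0, exp (-(s * t)) * (t ^ (σ - 1) * mittagLeffler α σ (c * t ^ α)) =
      s ^ (α - σ) / (s ^ α - c) := by
  have hsα : 0 < s ^ α := rpow_pos_of_pos hs α
  have hratio : |c / s ^ α| < 1 := by rwa [abs_div, abs_of_pos hsα, div_lt_one hsα]
  have hint := integrableOn_mittagLefflerLaplaceTerm (c := c) hα hσ hs
  have hnorm : Summable fun k ↦ ∫ t in Ioi 0, ‖mittagLefflerLaplaceTerm α σ c s k t‖ := by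
    have hnorm_integral (k : ℕ) : ∫ t in Ioi 0, ‖mittagLefflerLaplaceTerm α σ c s k t‖ =
        (|c| / s ^ α) ^ k / s ^ σ := by
      rw [setIntegral_congr_fun measurableSet_Ioi
          fun t ht ↦ norm_mittagLefflerLaplaceTerm hα hσ ht k,
        integral_mittagLefflerLaplaceTerm hα hσ hs]
    simp_rw [hnorm_integral]
    refine (summable_geometric_of_lt_one (by positivity) ?_).div_const _
    rwa [← abs_of_pos hsα, ← abs_div]
  have hseries : EqOn (fun t ↦ exp (-(s * t)) * (t ^ (σ - 1) * mittagLeffler α σ (c * t ^ α)))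
      (fun t ↦ ∑' k, mittagLefflerLaplaceTerm α σ c s k t) (Ioi 0) :=
    fun t ht ↦ (tsum_mittagLefflerLaplaceTerm ht).symm
  refine ⟨IntegrableOn.congr_fun (integrable_tsum_of_summable_integral_norm hint hnorm)
    hseries.symm measurableSet_Ioi, ?_⟩
  rw [setIntegral_congr_fun measurableSet_Ioi hseries]
  refine (hasSum_integral_of_summable_integral_norm hint hnorm).unique ?_
  simp_rw [integral_mittagLefflerLaplaceTerm hα hσ hs]
  rw [show s ^ (α - σ) / (s ^ α - c) = (1 - c / s ^ α)⁻¹ / s ^ σ by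
    rw [rpow_sub hs]; field_simp]
  exact (hasSum_geometric_of_abs_lt_one hratio).div_const _

end MittagLeffler

theorem laplace_transform_mittagLeffler_general (α lam s : ℝ) (hα0 : 0 < α)
    (hlam : 0 < lam) (hs : lam ^ (1 / α) < s) :
    IntegrableOn (fun t : ℝ => Real.exp (-(s * t)) * mittagLeffler α 1 (-lam * t ^ α))
      (Ioi 0) ∧
    (∫ t in Ioi (0:ℝ), Real.exp (-(s * t)) * mittagLeffler α 1 (-lam * t ^ α))
      = s ^ (α - 1) / (s ^ α + lam) := by
  have hs0 : 0 < s := (rpow_pos_of_pos hlam _).trans hs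
  have hlam_lt : |-lam| < s ^ α := by
    rwa [abs_neg, abs_of_pos hlam, ← rpow_inv_lt_iff_of_pos hlam.le hs0.le hα0, ← one_div]
  simpa only [sub_self, rpow_zero, one_mul, sub_neg_eq_add] using
    laplace_transform_rpow_mul_mittagLeffler hα0.le one_pos hs0 hlam_lt

theorem laplace_transform_mittagLeffler (α lam s : ℝ) (hα0 : 0 < α) (hα1 : α < 1)
    (hlam : 0 < lam) (hs : lam ^ (1 / α) < s) :
    IntegrableOn (fun t : ℝ => Real.exp (-(s * t)) * mittagLeffler α 1 (-lam * t ^ α))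
      (Ioi 0) ∧
    (∫ t in Ioi (0:ℝ), Real.exp (-(s * t)) * mittagLeffler α 1 (-lam * t ^ α))
      = s ^ (α - 1) / (s ^ α + lam) :=
  laplace_transform_mittagLeffler_general α lam s hα0 hlam hs
end

section
/- Let 0 < γ < 1 and 0 < t₁ < t₂. Then ∫_0^{t₁} τ^{−γ} ( (t₁−τ)^{γ−1} − (t₂−τ)^{γ−1} ) dτ ≤ (1/γ) · (t₂ − t₁)^γ / t₁^γ. -/
open Real Set MeasureTheory

private lemma aux_intg_lt (γ : ℝ) (hγ0 : 0 < γ) (hγ1 : γ < 1) {a b T : ℝ}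
    (ha : 0 ≤ a) (hbT : b < T) (hab : a ≤ b) :
    IntervalIntegrable (fun τ => τ ^ (-γ) * (T - τ) ^ (γ - 1)) volume a b := by
  have h1 : IntervalIntegrable (fun τ : ℝ => τ ^ (-γ)) volume a b :=
    intervalIntegral.intervalIntegrable_rpow' (by linarith)
  refine h1.mul_continuousOn ?_
  refine ContinuousOn.rpow_const (by fun_prop) fun x hx => Or.inl ?_
  rw [uIcc_of_le hab] at hx
  have : x ≤ b := hx.2
  exact ne_of_gt (by linarith)

private lemma aux_intg_self (γ : ℝ) (hγ0 : 0 < γ) (hγ1 : γ < 1) {t : ℝ} (ht : 0 < t) :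
    IntervalIntegrable (fun τ => τ ^ (-γ) * (t - τ) ^ (γ - 1)) volume 0 t := by
  have hhalf : (0:ℝ) < t / 2 := by linarith
  have part1 : IntervalIntegrable (fun τ => τ ^ (-γ) * (t - τ) ^ (γ - 1)) volume 0 (t / 2) :=
    aux_intg_lt γ hγ0 hγ1 le_rfl (by linarith) (by linarith)
  have part2 : IntervalIntegrable (fun τ => τ ^ (-γ) * (t - τ) ^ (γ - 1)) volume (t / 2) t := by
    have hf : IntervalIntegrable (fun τ : ℝ => (t - τ) ^ (γ - 1)) volume (t / 2) t := by
      have := (intervalIntegral.intervalIntegrable_rpow'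
        (r := γ - 1) (by linarith) (a := t / 2) (b := 0)).comp_sub_left t
      simpa [sub_half] using this
    refine hf.continuousOn_mul ?_
    refine ContinuousOn.rpow_const (by fun_prop) fun x hx => Or.inl ?_
    rw [uIcc_of_le (by linarith)] at hx
    have : t / 2 ≤ x := hx.1
    exact ne_of_gt (by linarith)
  exact part1.trans part2

private lemma aux_intg_tail (γ : ℝ) (hγ0 : 0 < γ) (hγ1 : γ < 1) {t₁ t₂ : ℝ}
    (ht1 : 0 < t₁) (h12 : t₁ ≤ t₂) :
    IntervalIntegrable (fun τ => τ ^ (-γ) * (t₂ - τ) ^ (γ - 1)) volume t₁ t₂ := by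
  have hf : IntervalIntegrable (fun τ : ℝ => (t₂ - τ) ^ (γ - 1)) volume t₁ t₂ := by
    have := (intervalIntegral.intervalIntegrable_rpow'
      (r := γ - 1) (by linarith) (a := t₂ - t₁) (b := 0)).comp_sub_left t₂
    simpa using this
  refine hf.continuousOn_mul ?_
  refine ContinuousOn.rpow_const (by fun_prop) fun x hx => Or.inl ?_
  rw [uIcc_of_le h12] at hx
  have : t₁ ≤ x := hx.1
  exact ne_of_gt (by linarith)

/-- Scale invariance of the Beta-type integral. -/
private lemma aux_scale (γ : ℝ) (hγ0 : 0 < γ) (hγ1 : γ < 1) {t : ℝ} (ht : 0 < t) :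
    (∫ τ in (0:ℝ)..t, τ ^ (-γ) * (t - τ) ^ (γ - 1))
      = ∫ s in (0:ℝ)..1, s ^ (-γ) * (1 - s) ^ (γ - 1) := by
  have hc := intervalIntegral.integral_comp_mul_right
    (fun τ : ℝ => τ ^ (-γ) * (t - τ) ^ (γ - 1)) (a := 0) (b := 1) ht.ne'
  rw [zero_mul, one_mul] at hc
  have ht0 : (0:ℝ) ≤ t := ht.le
  have key : ∀ s ∈ uIcc (0:ℝ) 1,
      t * ((s * t) ^ (-γ) * (t - s * t) ^ (γ - 1)) = s ^ (-γ) * (1 - s) ^ (γ - 1) := by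
    intro s hs
    rw [uIcc_of_le zero_le_one] at hs
    have hs0 : (0:ℝ) ≤ s := hs.1
    have hs1 : s ≤ 1 := hs.2
    have e1 : (s * t) ^ (-γ) = s ^ (-γ) * t ^ (-γ) := Real.mul_rpow hs0 ht0
    have e2 : t - s * t = t * (1 - s) := by ring
    have e3 : (t * (1 - s)) ^ (γ - 1) = t ^ (γ - 1) * (1 - s) ^ (γ - 1) :=
      Real.mul_rpow ht0 (by linarith)
    rw [e1, e2, e3]
    have e5 : t ^ (-γ) * t ^ (γ - 1) = t⁻¹ := by
      rw [← Real.rpow_add ht, show -γ + (γ - 1) = -1 by ring, Real.rpow_neg_one]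
    calc t * (s ^ (-γ) * t ^ (-γ) * (t ^ (γ - 1) * (1 - s) ^ (γ - 1)))
        = t * (t ^ (-γ) * t ^ (γ - 1)) * (s ^ (-γ) * (1 - s) ^ (γ - 1)) := by ring
      _ = s ^ (-γ) * (1 - s) ^ (γ - 1) := by
          rw [e5, mul_inv_cancel₀ ht.ne', one_mul]
  calc (∫ τ in (0:ℝ)..t, τ ^ (-γ) * (t - τ) ^ (γ - 1))
      = t • ∫ s in (0:ℝ)..1, (s * t) ^ (-γ) * (t - s * t) ^ (γ - 1) := by
        rw [hc, smul_smul, mul_inv_cancel₀ ht.ne', one_smul]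
    _ = ∫ s in (0:ℝ)..1, t * ((s * t) ^ (-γ) * (t - s * t) ^ (γ - 1)) := by
        rw [intervalIntegral.integral_const_mul, smul_eq_mul]
    _ = ∫ s in (0:ℝ)..1, s ^ (-γ) * (1 - s) ^ (γ - 1) :=
        intervalIntegral.integral_congr key

theorem singular_kernel_difference_integral_bound (γ t₁ t₂ : ℝ) (hγ0 : 0 < γ) (hγ1 : γ < 1)
    (ht1 : 0 < t₁) (h12 : t₁ < t₂) :
    (∫ τ in (0:ℝ)..t₁, τ ^ (-γ) * ((t₁ - τ) ^ (γ - 1) - (t₂ - τ) ^ (γ - 1)))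
      ≤ (1 / γ) * (t₂ - t₁) ^ γ / t₁ ^ γ := by
  have ht2 : 0 < t₂ := lt_trans ht1 h12
  have h1 : IntervalIntegrable (fun τ => τ ^ (-γ) * (t₁ - τ) ^ (γ - 1)) volume 0 t₁ :=
    aux_intg_self γ hγ0 hγ1 ht1
  have h2a : IntervalIntegrable (fun τ => τ ^ (-γ) * (t₂ - τ) ^ (γ - 1)) volume 0 t₁ :=
    aux_intg_lt γ hγ0 hγ1 le_rfl h12 ht1.le
  have h2b : IntervalIntegrable (fun τ => τ ^ (-γ) * (t₂ - τ) ^ (γ - 1)) volume t₁ t₂ :=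
    aux_intg_tail γ hγ0 hγ1 ht1 h12.le
  -- rewrite LHS as the tail integral
  have hsplit : (∫ τ in (0:ℝ)..t₁, τ ^ (-γ) * (t₂ - τ) ^ (γ - 1))
      + (∫ τ in t₁..t₂, τ ^ (-γ) * (t₂ - τ) ^ (γ - 1))
      = ∫ τ in (0:ℝ)..t₂, τ ^ (-γ) * (t₂ - τ) ^ (γ - 1) :=
    intervalIntegral.integral_add_adjacent_intervals h2a h2b
  have hLHS : (∫ τ in (0:ℝ)..t₁, τ ^ (-γ) * ((t₁ - τ) ^ (γ - 1) - (t₂ - τ) ^ (γ - 1)))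
      = ∫ τ in t₁..t₂, τ ^ (-γ) * (t₂ - τ) ^ (γ - 1) := by
    have heq : (∫ τ in (0:ℝ)..t₁, τ ^ (-γ) * ((t₁ - τ) ^ (γ - 1) - (t₂ - τ) ^ (γ - 1)))
        = (∫ τ in (0:ℝ)..t₁, τ ^ (-γ) * (t₁ - τ) ^ (γ - 1))
          - ∫ τ in (0:ℝ)..t₁, τ ^ (-γ) * (t₂ - τ) ^ (γ - 1) := by
      rw [← intervalIntegral.integral_sub h1 h2a]
      congr 1; funext τ; ring
    rw [heq, aux_scale γ hγ0 hγ1 ht1, ← aux_scale γ hγ0 hγ1 ht2, ← hsplit]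
    ring
  rw [hLHS]
  -- bound the tail integral
  have hbound : (∫ τ in t₁..t₂, τ ^ (-γ) * (t₂ - τ) ^ (γ - 1))
      ≤ ∫ τ in t₁..t₂, t₁ ^ (-γ) * (t₂ - τ) ^ (γ - 1) := by
    have hint2 : IntervalIntegrable (fun τ => t₁ ^ (-γ) * (t₂ - τ) ^ (γ - 1)) volume t₁ t₂ := by
      have := (intervalIntegral.intervalIntegrable_rpow'
        (r := γ - 1) (by linarith) (a := t₂ - t₁) (b := 0)).comp_sub_left t₂
      simpa using this.const_mul _
    refine intervalIntegral.integral_mono_on h12.le h2b hint2 fun x hx => ?_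
    have hx1 : t₁ ≤ x := hx.1
    have hx2 : x ≤ t₂ := hx.2
    refine mul_le_mul_of_nonneg_right (Real.rpow_le_rpow_of_nonpos ht1 hx1 (by linarith)) ?_
    exact Real.rpow_nonneg (by linarith) _
  refine hbound.trans ?_
  have hval : (∫ τ in t₁..t₂, (t₂ - τ) ^ (γ - 1)) = (t₂ - t₁) ^ γ / γ := by
    rw [intervalIntegral.integral_comp_sub_left (fun u : ℝ => u ^ (γ - 1)) t₂, sub_self,
      _root_.integral_rpow (Or.inl (by linarith))]
    rw [show γ - 1 + 1 = γ by ring, Real.zero_rpow hγ0.ne', sub_zero]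
  rw [intervalIntegral.integral_const_mul, hval, Real.rpow_neg ht1.le]
  apply le_of_eq
  rw [div_eq_mul_inv ((1 / γ) * (t₂ - t₁) ^ γ) (t₁ ^ γ), one_div]
  ring
end

section
/- Let 0 < α < 1, λ > 0, and 0 ≤ t₁ ≤ t₂. Then E_α(−λ t₂^α) − E_α(−λ t₁^α) = −λ ∫_{t₁}^{t₂} τ^{α−1} E_{α,α}(−λ τ^α) dτ. -/
open Real Set MeasureTheory

/-- Core summability: geometric-type bound via Γ growth. -/
lemma summable_ml_core (α σ x : ℝ) (hα : 0 < α) (hσ : 2 ≤ σ) (hx : 0 ≤ x) :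
    Summable (fun k : ℕ => x ^ k / Real.Gamma (α * k + σ)) := by
  set a : ℕ → ℝ := fun k => x ^ k / Real.Gamma (α * k + σ) with ha
  have hpos : ∀ k : ℕ, 0 < α * k + σ := fun k => by positivity
  have hΓpos : ∀ k : ℕ, 0 < Real.Gamma (α * k + σ) := fun k =>
    Real.Gamma_pos_of_pos (hpos k)
  have hanon : ∀ k, 0 ≤ a k := fun k => div_nonneg (pow_nonneg hx k) (hΓpos k).le
  -- choose N with 2 ≤ α * N
  obtain ⟨N, hN⟩ := exists_nat_gt (2 / α)
  have hαN : 2 ≤ α * N := by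
    rw [div_lt_iff₀ hα] at hN; linarith [hN]
  -- key Gamma growth
  have key : ∀ k : ℕ, (α * k + σ) * Real.Gamma (α * k + σ) ≤
      Real.Gamma (α * (k + N : ℕ) + σ) := by
    intro k
    rw [← Real.Gamma_add_one (hpos k).ne']
    apply Real.Gamma_strictMonoOn_Ici.monotoneOn
    · simp only [mem_Ici]; nlinarith [hα.le, (Nat.cast_nonneg k : (0:ℝ) ≤ k)]
    · simp only [mem_Ici]; push_cast; nlinarith [(Nat.cast_nonneg k : (0:ℝ) ≤ k)]
    · push_cast; nlinarith [(Nat.cast_nonneg k : (0:ℝ) ≤ k)]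
  -- choose K with 2 * x^N ≤ α * K
  obtain ⟨K, hK⟩ := exists_nat_gt (2 * x ^ N / α)
  have hαK : 2 * x ^ N ≤ α * K := by rw [div_lt_iff₀ hα] at hK; linarith [hK]
  have step : ∀ k : ℕ, K ≤ k → a (k + N) ≤ a k / 2 := by
    intro k hk
    have h1 : 2 * x ^ N ≤ α * k + σ := by
      have : (K:ℝ) ≤ k := Nat.cast_le.mpr hk
      nlinarith [hα.le]
    have hΓ2 : 0 < Real.Gamma (α * (k + N : ℕ) + σ) := hΓpos (k + N)
    have : a (k + N) ≤ x ^ (k + N) / ((α * k + σ) * Real.Gamma (α * k + σ)) := by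
      apply div_le_div_of_nonneg_left (pow_nonneg hx _) _ (key k)
      positivity
    refine this.trans ?_
    rw [pow_add, div_le_div_iff₀ (by positivity) (by positivity)]
    have hxk : (0:ℝ) ≤ x ^ k := pow_nonneg hx k
    have hak : a k * Real.Gamma (α * k + σ) = x ^ k := div_mul_cancel₀ _ (hΓpos k).ne'
    calc x ^ k * x ^ N * 2 ≤ x ^ k * (α * k + σ) := by nlinarith [h1]
    _ = a k * ((α * k + σ) * Real.Gamma (α * k + σ)) := by rw [mul_comm (α * ↑k + σ), ← mul_assoc, hak]
  -- geometric bound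
  set r : ℝ := (2:ℝ)⁻¹ ^ ((N:ℝ)⁻¹) with hr
  have hN0 : 0 < N := by
    by_contra h
    push_neg at h
    interval_cases N
    simp at hαN; linarith
  have hr0 : 0 < r := Real.rpow_pos_of_pos (by norm_num) _
  have hr1 : r < 1 := Real.rpow_lt_one (by norm_num) (by norm_num)
    (by positivity)
  have hrN : r ^ N = 2⁻¹ := by
    rw [hr, ← Real.rpow_natCast (((2:ℝ)⁻¹)^((N:ℝ)⁻¹)) N, ← Real.rpow_mul (by norm_num),
      inv_mul_cancel₀ (by exact_mod_cast hN0.ne'), Real.rpow_one]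
  set M : ℝ := ∑ j ∈ Finset.range (K + N), a j / r ^ j with hM
  have hinit : ∀ k, k < K + N → a k ≤ M * r ^ k := by
    intro k hk
    have h1 : a k / r ^ k ≤ M :=
      Finset.single_le_sum (f := fun j => a j / r ^ j)
        (fun j _ => div_nonneg (hanon j) (pow_nonneg hr0.le j)) (Finset.mem_range.mpr hk)
    calc a k = a k / r ^ k * r ^ k := by field_simp
    _ ≤ M * r ^ k := by
      apply mul_le_mul_of_nonneg_right h1 (pow_nonneg hr0.le k)
  have hbound : ∀ k, a k ≤ M * r ^ k := by
    intro k
    induction k using Nat.strong_induction_on with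
    | _ k ih =>
      rcases lt_or_ge k (K + N) with h | h
      · exact hinit k h
      · have hkN : N ≤ k := le_trans (Nat.le_add_left N K) h
        have hkK : K ≤ k - N := Nat.le_sub_of_add_le (by omega)
        have hk' : k - N + N = k := Nat.sub_add_cancel hkN
        have h2 : a k ≤ a (k - N) / 2 := by
          have := step (k - N) hkK; rwa [hk'] at this
        have h3 : a (k - N) ≤ M * r ^ (k - N) := ih (k - N) (by omega)
        calc a k ≤ M * r ^ (k - N) / 2 := by linarith
        _ = M * r ^ k := by
          rw [div_eq_mul_inv, ← hrN, mul_assoc, ← pow_add, hk']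
  exact Summable.of_nonneg_of_le hanon hbound
    ((summable_geometric_of_lt_one hr0.le hr1).mul_left M)

lemma summable_ml (α σ x : ℝ) (hα : 0 < α) :
    Summable (fun k : ℕ => x ^ k / Real.Gamma (α * k + σ)) := by
  obtain ⟨K, hK⟩ := exists_nat_gt ((2 - σ) / α)
  have hσK : 2 ≤ α * K + σ := by rw [div_lt_iff₀ hα] at hK; linarith
  rw [← summable_nat_add_iff K]
  apply Summable.of_abs
  have heq : ∀ k : ℕ, |x ^ (k + K) / Real.Gamma (α * ((k + K : ℕ) : ℝ) + σ)|
      = |x| ^ K * (|x| ^ k / Real.Gamma (α * k + (α * K + σ))) := by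
    intro k
    have harg : α * ((k + K : ℕ) : ℝ) + σ = α * k + (α * K + σ) := by push_cast; ring
    have hΓ : 0 < Real.Gamma (α * k + (α * K + σ)) :=
      Real.Gamma_pos_of_pos (by positivity)
    rw [harg, abs_div, abs_pow, abs_of_pos hΓ, pow_add, mul_comm (|x| ^ k), mul_div_assoc]
  simp only [heq]
  exact (summable_ml_core α (α*K+σ) |x| hα hσK (abs_nonneg x)).mul_left _

theorem mittagLeffler_difference_integral (α lam t₁ t₂ : ℝ) (hα0 : 0 < α) (hα1 : α < 1)
    (hlam : 0 < lam) (h1 : 0 ≤ t₁) (h12 : t₁ ≤ t₂) :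
    mittagLeffler α 1 (-(lam * t₂ ^ α)) - mittagLeffler α 1 (-(lam * t₁ ^ α))
      = -lam * ∫ τ in t₁..t₂, τ ^ (α - 1) * mittagLeffler α α (-(lam * τ ^ α)) := by
  have h2 : 0 ≤ t₂ := h1.trans h12
  set q : ℕ → ℝ := fun k => α * ((k : ℝ) + 1) with hqdef
  have hq : ∀ k : ℕ, 0 < q k := fun k => by positivity
  have hΓq : ∀ k : ℕ, 0 < Real.Gamma (q k) := fun k => Real.Gamma_pos_of_pos (hq k)
  have hpow : ∀ t : ℝ, 0 ≤ t → ∀ k : ℕ, (-(lam * t ^ α)) ^ k = (-lam) ^ k * t ^ (α * (k : ℝ)) := by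
    intro t ht k
    rw [Real.rpow_mul ht, Real.rpow_natCast, show -(lam * t ^ α) = -lam * t ^ α by ring, mul_pow]
  set g : ℕ → ℝ → ℝ := fun k τ => (-lam) ^ k / Real.Gamma (q k) * τ ^ (q k - 1) with hgdef
  -- left-hand side as a shifted sum
  set b : ℕ → ℝ := fun k =>
    ((-(lam * t₂ ^ α)) ^ k - (-(lam * t₁ ^ α)) ^ k) / Real.Gamma (α * (k : ℝ) + 1) with hbdef
  have hb : Summable b := by
    have := (summable_ml α 1 (-(lam * t₂ ^ α)) hα0).sub (summable_ml α 1 (-(lam * t₁ ^ α)) hα0)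
    simpa [hbdef, sub_div] using this
  have hLHS : mittagLeffler α 1 (-(lam * t₂ ^ α)) - mittagLeffler α 1 (-(lam * t₁ ^ α))
      = ∑' k : ℕ, b (k + 1) := by
    rw [mittagLeffler, mittagLeffler,
      ← Summable.tsum_sub (summable_ml α 1 _ hα0) (summable_ml α 1 _ hα0)]
    have : ∀ k : ℕ, (-(lam * t₂ ^ α)) ^ k / Real.Gamma (α * (k : ℝ) + 1)
        - (-(lam * t₁ ^ α)) ^ k / Real.Gamma (α * (k : ℝ) + 1) = b k := fun k => by
      rw [hbdef]; ring
    rw [tsum_congr this, Summable.tsum_eq_zero_add hb]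
    simp [hbdef]
  -- integrand equals the series of g pointwise on Ioc
  have hcongr : EqOn (fun τ => τ ^ (α - 1) * mittagLeffler α α (-(lam * τ ^ α)))
      (fun τ => ∑' k : ℕ, g k τ) (Ioc t₁ t₂) := by
    intro τ hτ
    have hτ0 : 0 < τ := h1.trans_lt hτ.1
    simp only [mittagLeffler, ← tsum_mul_left]
    refine tsum_congr fun k => ?_
    rw [hpow τ hτ0.le k, hgdef]
    have he : τ ^ (α - 1) * τ ^ (α * (k : ℝ)) = τ ^ (q k - 1) := by
      rw [← Real.rpow_add hτ0]; congr 1; rw [hqdef]; ring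
    have harg : α * (k : ℝ) + α = q k := by rw [hqdef]; ring
    rw [harg]
    calc τ ^ (α - 1) * ((-lam) ^ k * τ ^ (α * (k : ℝ)) / Real.Gamma (q k))
        = (-lam) ^ k / Real.Gamma (q k) * (τ ^ (α - 1) * τ ^ (α * (k : ℝ))) := by ring
      _ = (-lam) ^ k / Real.Gamma (q k) * τ ^ (q k - 1) := by rw [he]
  -- each g k is integrable on Ioc
  have hint : ∀ k : ℕ, IntegrableOn (g k) (Ioc t₁ t₂) := by
    intro k
    have h' : IntervalIntegrable (fun τ : ℝ => τ ^ (q k - 1)) volume t₁ t₂ :=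
      intervalIntegral.intervalIntegrable_rpow' (by linarith [hq k])
    exact (intervalIntegrable_iff_integrableOn_Ioc_of_le h12).mp
      (h'.const_mul ((-lam) ^ k / Real.Gamma (q k)))
  -- value of each integral
  have hrpowint : ∀ k : ℕ, ∫ τ in Ioc t₁ t₂, τ ^ (q k - 1)
      = (t₂ ^ q k - t₁ ^ q k) / q k := by
    intro k
    rw [← intervalIntegral.integral_of_le h12,
      integral_rpow (Or.inl (by linarith [hq k]))]
    norm_num
  have hval : ∀ k : ℕ, ∫ τ in Ioc t₁ t₂, g k τ
      = (-lam) ^ k / Real.Gamma (q k) * ((t₂ ^ q k - t₁ ^ q k) / q k) := by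
    intro k
    rw [hgdef]
    simp only []
    rw [MeasureTheory.integral_const_mul, hrpowint k]
  -- summability of integrals of norms
  have hnorm : ∀ k : ℕ, ∫ τ in Ioc t₁ t₂, ‖g k τ‖
      = lam ^ k / Real.Gamma (q k) * ((t₂ ^ q k - t₁ ^ q k) / q k) := by
    intro k
    rw [setIntegral_congr_fun measurableSet_Ioc
      (show EqOn (fun τ => ‖g k τ‖)
        (fun τ => lam ^ k / Real.Gamma (q k) * τ ^ (q k - 1)) (Ioc t₁ t₂) from by
        intro τ hτ
        have hτ0 : 0 < τ := h1.trans_lt hτ.1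
        simp only [hgdef, Real.norm_eq_abs, abs_mul, abs_div, abs_pow, abs_neg,
          abs_of_pos hlam, abs_of_pos (hΓq k), abs_of_pos (Real.rpow_pos_of_pos hτ0 _)])]
    rw [MeasureTheory.integral_const_mul, hrpowint k]
  have hnormsum : Summable fun k : ℕ => ∫ τ in Ioc t₁ t₂, ‖g k τ‖ := by
    refine Summable.of_nonneg_of_le
      (fun k => integral_nonneg fun τ => norm_nonneg _) (fun k => ?_)
      ((summable_ml α (α + 1) (lam * t₂ ^ α) hα0).mul_left (t₂ ^ α))
    rw [hnorm k]
    have hΓ1 : Real.Gamma (q k + 1) = q k * Real.Gamma (q k) :=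
      Real.Gamma_add_one (hq k).ne'
    have harg : α * (k : ℝ) + (α + 1) = q k + 1 := by rw [hqdef]; ring
    have ht2q : t₂ ^ q k = t₂ ^ α * (t₂ ^ α) ^ k := by
      rw [← Real.rpow_natCast (t₂ ^ α) k, ← Real.rpow_mul h2,
        show q k = α + α * (k : ℝ) from by rw [hqdef]; ring,
        Real.rpow_add' h2 (by positivity)]
    have hΓ1pos : 0 < Real.Gamma (q k + 1) := by
      rw [hΓ1]; exact mul_pos (hq k) (hΓq k)
    calc lam ^ k / Real.Gamma (q k) * ((t₂ ^ q k - t₁ ^ q k) / q k)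
        ≤ lam ^ k / Real.Gamma (q k) * (t₂ ^ q k / q k) := by
          gcongr
          exact sub_le_self _ (Real.rpow_nonneg h1 _)
      _ = t₂ ^ α * ((lam * t₂ ^ α) ^ k / Real.Gamma (α * (k : ℝ) + (α + 1))) := by
          rw [harg, hΓ1, ht2q, mul_pow]
          field_simp
  rw [hLHS, intervalIntegral.integral_of_le h12,
    setIntegral_congr_fun measurableSet_Ioc hcongr,
    ← MeasureTheory.integral_tsum_of_summable_integral_norm hint hnormsum,
    ← tsum_mul_left]
  refine tsum_congr fun k => ?_
  rw [hval k]
  simp only [hbdef, hqdef]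
  rw [hpow t₂ h2 (k + 1), hpow t₁ h1 (k + 1)]
  push_cast
  have h0 : α * ((k : ℝ) + 1) ≠ 0 := by positivity
  rw [Real.Gamma_add_one h0]
  have hΓ := Real.Gamma_pos_of_pos (show 0 < α * ((k : ℝ) + 1) by positivity)
  field_simp
  ring
end
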